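/- arXiv:1512.06310 — 2 statements merged into one kernel-verified Lean document; each statement's English description precedes it below -/
import Mathlib

section
/- For all integers n ≥ 4 and α ≥ 2, T(n+2^α, 4) ≡ T(n, 4) + C(n−1, 2)·2^{α+2} (mod 2^{α+3}). -/
/-!
Both `9·T(n,4)` and `C(n-1,2)` are polynomial in `n`: `9·T(n,4) = a (a + 2)²` with `a = n (n - 3)`,
so that `a + 2 = (n - 1)(n - 2)`. Shifting `n` by `h` with `4 ∣ h` replaces `a` by `a + h s`,
`s = 2n - 3 + h`, so the change of `a (a + 2)²` is `h` times an integer polynomial in `n` and `h / 4`,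
which agrees with `18 (n - 1)(n - 2)` modulo `8`: a finite check in `ZMod 8`. The factor `9` is then
cancelled, being a unit modulo powers of `2`.
-/

/-- `T n k = (1/n)·C(n,k)·C(n,k-1)·2^k`, which is `2^k` times the Narayana number.
The natural division is exact since `n ∣ C(n,k)·C(n,k-1)`. -/
def T (n k : ℕ) : ℕ := n.choose k * n.choose (k - 1) * 2 ^ k / n

open Nat

theorem Nat.two_mul_cast_choose_two {R : Type*} [CommRing R] (n : ℕ) :
    2 * (n.choose 2 : R) = n * (n - 1) := by
  have h := descPochhammer_eval_eq_descFactorial R n 2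
  rw [descPochhammer_eval_eq_prod_range, descFactorial_eq_factorial_mul_choose] at h
  linear_combination (norm := (push_cast [factorial, Finset.prod_range_succ]; ring)) -h

theorem Nat.six_mul_cast_choose_three {R : Type*} [CommRing R] (n : ℕ) :
    6 * (n.choose 3 : R) = n * (n - 1) * (n - 2) := by
  have h := descPochhammer_eval_eq_descFactorial R n 3
  rw [descPochhammer_eval_eq_prod_range, descFactorial_eq_factorial_mul_choose] at h
  linear_combination (norm := (push_cast [factorial, Finset.prod_range_succ]; ring)) -h

theorem T_four_eq (n : ℕ) : T n 4 = 4 * (n - 1).choose 3 * n.choose 3 := by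
  rcases n with _ | m
  · rfl
  · have h : (m + 1).choose 4 * (m + 1).choose 3 * 2 ^ 4
        = (m + 1) * (4 * m.choose 3 * (m + 1).choose 3) := by
      linear_combination (4 * (m + 1).choose 3) * (add_one_mul_choose_eq m 3).symm
    rw [T, h]
    simp

theorem nine_mul_T_four (n : ℕ) :
    9 * (T n 4 : ℤ) = n * (n - 3) * ((n - 1) * (n - 2)) ^ 2 := by
  rcases n with _ | m
  · rfl
  · rw [T_four_eq, Nat.add_sub_cancel]
    linear_combination (norm := (push_cast; ring))
      (6 * ((m + 1).choose 3 : ℤ)) * six_mul_cast_choose_three (R := ℤ) m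
        + ((m : ℤ) * (m - 1) * (m - 2)) * six_mul_cast_choose_three (R := ℤ) (m + 1)

theorem shift_modEq_of_four_dvd (x h : ℤ) (hh : 4 ∣ h) :
    (x + h) * (x + h - 3) * ((x + h - 1) * (x + h - 2)) ^ 2
      ≡ x * (x - 3) * ((x - 1) * (x - 2)) ^ 2 + 18 * h * ((x - 1) * (x - 2)) [ZMOD 8 * h] := by
  obtain ⟨k, rfl⟩ := hh
  -- With `a = x (x - 3)`, `b = a + 2` and `s = 2x - 3 + 4k`, the difference of the two sides is `4k`
  -- times `s b (b + 2a) + 4k s² (a + 2b) + 16k² s³ - 18 b`, the polynomial below.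
  have hquot : (8 : ℤ) ∣ (2 * x - 3 + 4 * k) * ((x - 1) * (x - 2)) *
        ((x - 1) * (x - 2) + 2 * x * (x - 3))
      + 4 * k * (2 * x - 3 + 4 * k) ^ 2 * (x * (x - 3) + 2 * ((x - 1) * (x - 2)))
      + 16 * k ^ 2 * (2 * x - 3 + 4 * k) ^ 3 - 18 * ((x - 1) * (x - 2)) := by
    apply (ZMod.intCast_zmod_eq_zero_iff_dvd _ 8).mp
    push_cast
    generalize (x : ZMod 8) = x
    generalize (k : ZMod 8) = k
    revert x k
    decide
  obtain ⟨c, hc⟩ := hquot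
  exact Int.modEq_iff_dvd.mpr ⟨-c, by linear_combination (-4 * k) * hc⟩

theorem T_four_shift (n α : ℕ) (hn : 4 ≤ n) (hα : 2 ≤ α) :
    T (n + 2 ^ α) 4 ≡ T n 4 + (n - 1).choose 2 * 2 ^ (α + 2) [MOD 2 ^ (α + 3)] := by
  have hT := nine_mul_T_four (n + 2 ^ α)
  push_cast at hT
  have hchoose : 2 * ((n - 1).choose 2 : ℤ) = (n - 1) * (n - 2) := by
    rw [two_mul_cast_choose_two, Nat.cast_sub (by omega)]
    ring
  have key := shift_modEq_of_four_dvd n (2 ^ α) (pow_dvd_pow 2 hα)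
  rw [← hT, ← nine_mul_T_four, ← hchoose] at key
  refine Nat.ModEq.cancel_left_of_coprime (c := 9) (by norm_num) ?_
  rw [← Int.natCast_modEq_iff]
  push_cast
  convert key using 1 <;> ring
end

section
/- For all integers n ≥ 5 and α ≥ 1 with 5 ≤ k ≤ n, if k ≥ 5 then k − ⌊log₂ k⌋ ≥ 3; consequently T(n+2^α, k) ≡ T(n, k) (mod 2^{α+3}) for all 5 ≤ k ≤ 2^α with k ≤ n. -/
namespace Nat

lemma lt_two_pow_sub_two {k : ℕ} (hk : 5 ≤ k) : k < 2 ^ (k - 2) := by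
  obtain ⟨i, rfl⟩ := Nat.exists_eq_add_of_le' hk
  have := i.lt_two_pow_self
  rw [show i + 5 - 2 = i + 3 by omega, pow_add]
  omega

lemma three_le_sub_log_two {k : ℕ} (hk : 5 ≤ k) : 3 ≤ k - log 2 k := by
  have := log_lt_of_lt_pow (by omega) (lt_two_pow_sub_two hk)
  omega

lemma pow_sub_log_dvd_choose_prime_pow {p a i k : ℕ} (hp : p.Prime) (hi : i ≠ 0) (hik : i ≤ k) :
    p ^ (a - log p k) ∣ (p ^ a).choose i := by
  rcases le_or_gt i (p ^ a) with hia | hia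
  · rw [hp.pow_dvd_iff_le_factorization (choose_pos hia).ne',
      factorization_choose_prime_pow hp hia hi]
    have : i.factorization p ≤ log p i :=
      le_log_of_pow_le hp.one_lt (le_of_dvd (pos_of_ne_zero hi) (ordProj_dvd i p))
    have := log_mono_right (b := p) hik
    omega
  · rw [choose_eq_zero_of_lt hia]
    exact dvd_zero _

lemma choose_add_prime_pow_modEq {p a j k : ℕ} (hp : p.Prime) (m : ℕ) (hjk : j ≤ k) :
    (m + p ^ a).choose j ≡ m.choose j [MOD p ^ (a - log p k)] := by
  rw [add_choose_eq, ← Finset.Nat.sum_antidiagonal_swap,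
    Finset.Nat.sum_antidiagonal_eq_sum_range_succ_mk, Finset.sum_range_succ']
  simp only [Prod.swap_prod_mk, Nat.sub_zero, choose_zero_right, mul_one]
  refine (Nat.modEq_zero_iff_dvd.2 (Finset.dvd_sum fun i hi => ?_)).add_right _ |>.trans ?_
  · exact dvd_mul_of_dvd_right (pow_sub_log_dvd_choose_prime_pow hp i.succ_ne_zero
      (by simp at hi; omega)) _
  · simp [Nat.ModEq]

lemma succ_choose_mul_succ_choose (m j : ℕ) :
    ((m + 1).choose (j + 2) * (m + 1).choose (j + 1) : ℤ) =
      (m + 1) * (m.choose (j + 1) ^ 2 - m.choose j * m.choose (j + 2)) := by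
  rcases le_or_gt (j + 1) m with hjm | hjm
  · have hB := choose_succ_right_eq m j
    have hC := choose_succ_right_eq m (j + 1)
    zify [show j ≤ m by omega, hjm] at hB hC
    rw [choose_succ_succ' m (j + 1), choose_succ_succ' m j]
    push_cast
    have hpos : ((m : ℤ) - j) * (j + 2) ≠ 0 := by
      apply mul_ne_zero <;> omega
    -- with `A, B, C := m.choose (j + 1), m.choose j, m.choose (j + 2)`, scaling by `(m - j)(j + 2)`
    -- lets `hB : A (j + 1) = B (m - j)` and `hC : C (j + 2) = A (m - j - 1)` eliminate `B` and `C`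
    apply mul_left_cancel₀ hpos
    linear_combination
      (-((j + 2) * (m.choose (j + 1) : ℤ) + (m + 2) * (m.choose (j + 2) * (j + 2)))) * hB +
        ((m + 2) * (m.choose (j + 1) : ℤ) * (j + 1) + (m - j) * m.choose (j + 1)) * hC
  · simp [choose_eq_zero_of_lt hjm, choose_eq_zero_of_lt (show m < j + 2 by omega),
      choose_eq_zero_of_lt (show m + 1 < j + 2 by omega)]

end Nat

open Nat

lemma T_succ_add_two (m j : ℕ) :
    (T (m + 1) (j + 2) : ℤ) =
      2 ^ (j + 2) * (m.choose (j + 1) ^ 2 - m.choose j * m.choose (j + 2)) := by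
  rw [T, Int.natCast_div]
  push_cast
  rw [succ_choose_mul_succ_choose, mul_right_comm, mul_assoc]
  exact Int.mul_ediv_cancel_left _ (by omega)

lemma sq_choose_sub_mul_choose_add_prime_pow_modEq {p a k : ℕ} (hp : p.Prime) (m j : ℕ)
    (hjk : j + 2 ≤ k) :
    ((m + p ^ a).choose (j + 1) ^ 2 - (m + p ^ a).choose j * (m + p ^ a).choose (j + 2) : ℤ) ≡
      m.choose (j + 1) ^ 2 - m.choose j * m.choose (j + 2) [ZMOD (p ^ (a - log p k) : ℕ)] := by
  have h i (hi : i ≤ k) := Int.natCast_modEq_iff.2 (choose_add_prime_pow_modEq (a := a) hp m hi)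
  exact ((h _ (by omega)).pow 2).sub ((h _ (by omega)).mul (h _ hjk))

theorem T_tail_shift_general (n α : ℕ) :
    (∀ k : ℕ, 5 ≤ k → 3 ≤ k - Nat.log 2 k)
      ∧ ∀ k : ℕ, 5 ≤ k → k ≤ 2 ^ α → k ≤ n →
          T (n + 2 ^ α) k ≡ T n k [MOD 2 ^ (α + 3)] := by
  refine ⟨fun k hk => three_le_sub_log_two hk, fun k hk hkα hkn => ?_⟩
  obtain ⟨m, rfl⟩ : ∃ m, n = m + 1 := ⟨n - 1, by omega⟩
  obtain ⟨j, rfl⟩ : ∃ j, k = j + 2 := ⟨k - 2, by omega⟩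
  have hlog : log 2 (j + 2) ≤ α := by
    simpa [log_pow] using log_mono_right (b := 2) hkα
  have hgap := three_le_sub_log_two hk
  rw [← Int.natCast_modEq_iff, add_right_comm, T_succ_add_two, T_succ_add_two]
  refine Int.ModEq.of_dvd ?_
    ((sq_choose_sub_mul_choose_add_prime_pow_modEq prime_two m j le_rfl).mul_left')
  push_cast
  rw [← pow_add]
  exact pow_dvd_pow 2 (by omega)

theorem T_tail_shift (n α : ℕ) (hn : 5 ≤ n) (hα : 1 ≤ α) :
    (∀ k : ℕ, 5 ≤ k → 3 ≤ k - Nat.log 2 k)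
      ∧ ∀ k : ℕ, 5 ≤ k → k ≤ 2 ^ α → k ≤ n →
          T (n + 2 ^ α) k ≡ T n k [MOD 2 ^ (α + 3)] :=
  T_tail_shift_general n α
end
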